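/- In the discrete optimal path parameterization setup, let V_k^p, Ṽ_k^p and a trial trajectory (x_k^{p*}, u_k^{p*}) be as follows: V_N^p = Φ on X_f; Ṽ_k^p(x) = inf_{u ∈ C_k(x)} [ L_k(x,u) + V_{k+1}^p(A_k x + b_k u) ]; V_k^p(x) ≤ Ṽ_k^p(x) for all x ∈ B_k; u_k^{p*} ∈ C_k(x_k^{p*}), x_{k+1}^{p*} = A_k x_k^{p*} + b_k u_k^{p*}, and Ṽ_k^p(x_k^{p*}) = L_k(x_k^{p*}, u_k^{p*}) + V_{k+1}^p(x_{k+1}^{p*}) for all k. Suppose additionally there exist points z_0,…,z_{N−1} ∈ ℝ^d, constants C_0,…,C_{N−1} > 0, and δ > 0 with ε ≥ 2δ such that for each k: Ṽ_k^p and V_k^p are C_k-Lipschitz on B_k ∩ {x : ‖x − z_k‖ ≤ ε}; x_k^{p*} ∈ B_k with ‖x_k^{p*} − z_k‖ ≤ δ; and there exists y_k ∈ B_k with ‖y_k − z_k‖ ≤ δ and Ṽ_k^p(y_k) = V_k^p(y_k). Then the DDP optimality gap satisfies Σ_{k=0}^{N−1} L_k(x_k^{p*}, u_k^{p*}) + Φ(x_N^{p*})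 − V_0^p(x_0^{p*}) ≤ 4δ Σ_{k=0}^{N−1} C_k. -/
import Mathlib


open Set

/-- Data of a discrete optimal path parameterization problem on the Euclidean state space
`ℝ^d`: dynamics matrices `A k`, vectors `b k`, componentwise state constraints `f k`,
mixed state-control constraints `h k`, and terminal set `Xf`. -/
structure DiscreteOPP (N d : ℕ) where
  A : ℕ → Matrix (Fin d) (Fin d) ℝ
  b : ℕ → EuclideanSpace ℝ (Fin d)
  m : ℕ → ℕ
  q : ℕ → ℕ
  f : (k : ℕ) → EuclideanSpace ℝ (Fin d) → Fin (m k) → ℝ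
  h : (k : ℕ) → EuclideanSpace ℝ (Fin d) → ℝ → Fin (q k) → ℝ
  Xf : Set (EuclideanSpace ℝ (Fin d))

namespace DiscreteOPP

variable {N d : ℕ} (P : DiscreteOPP N d)

/-- One step of the dynamics: `x_{k+1} = A_k x_k + b_k u_k`. -/
noncomputable def step (k : ℕ) (x : EuclideanSpace ℝ (Fin d)) (u : ℝ) :
    EuclideanSpace ℝ (Fin d) :=
  (EuclideanSpace.equiv (Fin d) ℝ).symm ((P.A k).mulVec x) + u • P.b k

/-- A feasible continuation from stage `k`. -/
def FeasFrom (k : ℕ) (x : ℕ → EuclideanSpace ℝ (Fin d)) (u : ℕ → ℝ) : Prop :=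
  (∀ j, k ≤ j → j < N →
      x (j + 1) = P.step j (x j) (u j) ∧ (∀ i, P.f j (x j) i ≤ 0) ∧
        (∀ i, P.h j (x j) (u j) i ≤ 0)) ∧
    x N ∈ P.Xf

/-- The backward reachable set `B_k` (with `BRS N = Xf`). -/
def BRS (k : ℕ) : Set (EuclideanSpace ℝ (Fin d)) :=
  {x0 | ∃ x u, x k = x0 ∧ P.FeasFrom k x u}

/-- The admissible control set `C_k(x)`. -/
def Ctrl (k : ℕ) (x : EuclideanSpace ℝ (Fin d)) : Set ℝ :=
  {u | (∀ i, P.h k x u i ≤ 0) ∧ P.step k x u ∈ P.BRS (k + 1)}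

end DiscreteOPP

/-- composite quantitative gap bound in the proof of Theorem 2: with
`V^p_N = Φ` on `X_f`, `Ṽ^p_k` the (finite) one-step Bellman backup of `V^p_{k+1}` on `B_k`,
`V^p_k ≤ Ṽ^p_k` on `B_k`, and a trial trajectory satisfying the forward-pass relations;
if moreover there are points `z_k`, constants `C_k > 0` and `ε ≥ 2δ > 0` such that `Ṽ^p_k`
and `V^p_k` are `C_k`-Lipschitz on `B_k ∩ {‖x − z_k‖ ≤ ε}`, the trial states satisfy
`x_k^{p*} ∈ B_k` with `‖x_k^{p*} − z_k‖ ≤ δ`, and at each stage some `y_k ∈ B_k` with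
`‖y_k − z_k‖ ≤ δ` satisfies `Ṽ^p_k(y_k) = V^p_k(y_k)`, then the DDP optimality gap obeys
`Σ_{k<N} L_k(x_k^{p*},u_k^{p*}) + Φ(x_N^{p*}) − V^p_0(x_0^{p*}) ≤ 4δ Σ_{k<N} C_k`. -/
theorem statement_18 {N d : ℕ} (hN : 1 ≤ N) (P : DiscreteOPP N d)
    (L : ℕ → EuclideanSpace ℝ (Fin d) → ℝ → ℝ) (Φ : EuclideanSpace ℝ (Fin d) → ℝ)
    (Vp Vtil : ℕ → EuclideanSpace ℝ (Fin d) → ℝ)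
    (hVpN : ∀ x ∈ P.Xf, Vp N x = Φ x)
    (hVtil : ∀ k < N, ∀ x ∈ P.BRS k,
      IsGLB {c | ∃ u ∈ P.Ctrl k x, c = L k x u + Vp (k + 1) (P.step k x u)} (Vtil k x))
    (hle : ∀ k < N, ∀ x ∈ P.BRS k, Vp k x ≤ Vtil k x)
    (xp : ℕ → EuclideanSpace ℝ (Fin d)) (up : ℕ → ℝ)
    (hfwd : ∀ k < N, up k ∈ P.Ctrl k (xp k) ∧
      xp (k + 1) = P.step k (xp k) (up k) ∧
      Vtil k (xp k) = L k (xp k) (up k) + Vp (k + 1) (xp (k + 1)))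
    (z : ℕ → EuclideanSpace ℝ (Fin d)) (C : ℕ → ℝ) (hC : ∀ k < N, 0 < C k)
    (δ ε : ℝ) (hδ : 0 < δ) (hεδ : 2 * δ ≤ ε)
    (hLipTil : ∀ k < N, ∀ x1 ∈ P.BRS k, ∀ x2 ∈ P.BRS k,
      ‖x1 - z k‖ ≤ ε → ‖x2 - z k‖ ≤ ε → |Vtil k x1 - Vtil k x2| ≤ C k * ‖x1 - x2‖)
    (hLipP : ∀ k < N, ∀ x1 ∈ P.BRS k, ∀ x2 ∈ P.BRS k,
      ‖x1 - z k‖ ≤ ε → ‖x2 - z k‖ ≤ ε → |Vp k x1 - Vp k x2| ≤ C k * ‖x1 - x2‖)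
    (hxp : ∀ k < N, xp k ∈ P.BRS k ∧ ‖xp k - z k‖ ≤ δ)
    (y : ℕ → EuclideanSpace ℝ (Fin d))
    (hy : ∀ k < N, y k ∈ P.BRS k ∧ ‖y k - z k‖ ≤ δ ∧ Vtil k (y k) = Vp k (y k)) :
    ((∑ k ∈ Finset.range N, L k (xp k) (up k)) + Φ (xp N)) - Vp 0 (xp 0) ≤
      4 * δ * ∑ k ∈ Finset.range N, C k := by
  -- gap bound at each stage
  have gap : ∀ k, k < N → Vtil k (xp k) ≤ Vp k (xp k) + 4 * δ * C k := by
    intro k hk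
    obtain ⟨hxB, hxz⟩ := hxp k hk
    obtain ⟨hyB, hyz, hyeq⟩ := hy k hk
    have hxε : ‖xp k - z k‖ ≤ ε := by linarith
    have hyε : ‖y k - z k‖ ≤ ε := by linarith
    have hxy : ‖xp k - y k‖ ≤ 2 * δ := by
      have h' : xp k - y k = (xp k - z k) - (y k - z k) := by abel
      rw [h']
      calc ‖(xp k - z k) - (y k - z k)‖ ≤ ‖xp k - z k‖ + ‖y k - z k‖ :=
            norm_sub_le _ _
        _ ≤ 2 * δ := by linarith
    have h1 := hLipTil k hk (xp k) hxB (y k) hyB hxε hyε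
    have h2 := hLipP k hk (y k) hyB (xp k) hxB hyε hxε
    have hyn : ‖y k - xp k‖ = ‖xp k - y k‖ := norm_sub_rev _ _
    have hCk := (hC k hk).le
    have e1 : Vtil k (xp k) - Vtil k (y k) ≤ C k * (2 * δ) := by
      have := (abs_le.mp h1).2
      have := mul_le_mul_of_nonneg_left hxy hCk
      linarith
    have e2 : Vp k (y k) - Vp k (xp k) ≤ C k * (2 * δ) := by
      have := (abs_le.mp h2).2
      have h3 : C k * ‖y k - xp k‖ ≤ C k * (2 * δ) := by
        rw [hyn]; exact mul_le_mul_of_nonneg_left hxy hCk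
      linarith
    nlinarith
  -- xp N ∈ Xf
  have hxN : xp N ∈ P.Xf := by
    have hk : N - 1 < N := by omega
    obtain ⟨hu, hx, _⟩ := hfwd (N - 1) hk
    have hmem : xp (N - 1 + 1) ∈ P.BRS (N - 1 + 1) := by rw [hx]; exact hu.2
    have hNe : N - 1 + 1 = N := by omega
    rw [hNe] at hmem
    obtain ⟨x, u, hxn, hfeas⟩ := hmem
    rw [← hxn]; exact hfeas.2
  -- telescoping
  have tele : ∀ n, n ≤ N →
      (∑ k ∈ Finset.range n, L k (xp k) (up k)) + Vp n (xp n) ≤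
        Vp 0 (xp 0) + 4 * δ * ∑ k ∈ Finset.range n, C k := by
    intro n hn
    induction n with
    | zero => simp
    | succ m ih =>
      have hm : m < N := by omega
      have ih' := ih (by omega)
      obtain ⟨hu, hx, heq⟩ := hfwd m hm
      have hg := gap m hm
      have hle' := hle m hm (xp m) (hxp m hm).1
      rw [Finset.sum_range_succ, Finset.sum_range_succ]
      have : L m (xp m) (up m) + Vp (m + 1) (xp (m + 1)) ≤
          Vp m (xp m) + 4 * δ * C m := by linarith
      linarith
  have := tele N le_rfl
  rw [hVpN (xp N) hxN] at this
  linarith
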